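/- arXiv:math/9802134 — 2 statements merged into one kernel-verified Lean document; each statement's English description precedes it below -/
import Mathlib

section
/- For every infinite cardinal κ, every cardinal λ ≥ κ, and every ordinal α ≤ κ⁺: Pr⁰_α(λ; <κ⁺, κ) holds if and only if Pr¹_α(λ; <κ⁺, κ) holds. Consequently, for every α ≤ κ⁺, λ⁰_α(κ) = λ¹_α(κ), where λ^l_α(κ) = min{λ : Pr^l_α(λ; <κ⁺, κ)}. -/
open FirstOrder Cardinal

universe u

namespace Sh522

/-- `a ∈ clLt L M κ B` iff `a` is in the `<κ`-closure of `B` in `M`: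
for some quantifier-free formula `φ(y, x₁, …, xₙ)` and parameters `b` from `B`,
`M ⊨ φ[a, b]` and the set of solutions of `φ(−, b)` has cardinality `< κ`. -/
def clLt (L : FirstOrder.Language.{u, u}) (M : Type u) [L.Structure M]
    (κ : Cardinal.{u}) (B : Set M) : Set M :=
  {a | ∃ (n : ℕ) (φ : L.Formula (Fin (n + 1))),
      FirstOrder.Language.BoundedFormula.IsQF φ ∧
      ∃ b : Fin n → M, (∀ i, b i ∈ B) ∧
        φ.Realize (Fin.cons a b) ∧
        Cardinal.mk {x : M // φ.Realize (Fin.cons x b)} < κ}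

/-- `rk^l(w, M; <κ) ≥ 0`. -/
def rkBase (L : FirstOrder.Language.{u, u}) (M : Type u) [L.Structure M]
    (κ : Cardinal.{u}) (w : Set M) : Prop :=
  w.Finite ∧ w.Nonempty ∧ ∀ a ∈ w, a ∉ clLt L M κ (w \ {a})

/-- The successor step of the rank: `rk^l(w, M; <κ) ≥ β + 1` where `P` is
`rk^l(−, M; <κ) ≥ β`. -/
def rkStep (L : FirstOrder.Language.{u, u}) (M : Type u) [L.Structure M]
    (l : ℕ) (κ : Cardinal.{u}) (P : Set M → Prop) (w : Set M) : Prop :=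
  w.Finite ∧ w.Nonempty ∧
  ∀ (n : ℕ) (a : Fin n → M), Function.Injective a → Set.range a = w →
    ∀ (k : Fin n) (φ : L.Formula (Fin n)),
      FirstOrder.Language.BoundedFormula.IsQF φ → φ.Realize a →
      ∃ b : Fin 2 → Fin n → M,
        P (Set.range fun p : Fin 2 × Fin n => b p.1 p.2) ∧
        (∀ i : Fin 2, φ.Realize (b i)) ∧
        b 0 k ≠ b 1 k ∧
        (∀ m : Fin n, m ≠ k → b 0 m = b 1 m) ∧
        (l = 0 → ∀ m : Fin n, b 0 m = a m)

/-- `rkGe L M l κ α w` says `rk^l(w, M; <κ) ≥ α`. -/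
noncomputable def rkGe (L : FirstOrder.Language.{u, u}) (M : Type u) [L.Structure M]
    (l : ℕ) (κ : Cardinal.{u}) (α : Ordinal.{u}) : Set M → Prop :=
  Ordinal.limitRecOn (motive := fun _ => Set M → Prop) α
    (rkBase L M κ)
    (fun _ ih => rkStep L M l κ ih)
    (fun o _ ih w => ∀ (β : Ordinal.{u}) (h : β < o), ih β h w)

/-- `Pr l α lam bound θ` is `Pr^l_α(lam; <bound, θ)`: every model with universe of
cardinality `lam` and vocabulary of cardinality `≤ θ` has `rk^l(M; <bound) ≥ α`,
where `rk^l(M; <bound) = sup { rk^l(w, M; <bound) + 1 : w ∈ [M]* }`. -/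
def Pr (l : ℕ) (α : Ordinal.{u}) (lam bound θ : Cardinal.{u}) : Prop :=
  ∀ (L : FirstOrder.Language.{u, u}) (M : Type u) (S : L.Structure M),
    Cardinal.mk M = lam → L.card ≤ θ →
    ∀ β < α, ∃ w : Set M, w.Finite ∧ w.Nonempty ∧ @rkGe L M S l bound β w

/-!
An `l = 0` witness pair is also an `l = 1` witness pair, so `rk⁰ ≤ rk¹` and `Pr⁰ → Pr¹`.
Conversely, to compute `rk⁰ ≥ β` in `M` with `β < κ⁺`, expand `M` by relations
`R_{φ,k,δ}(c)` (`φ` quantifier free, `k` a coordinate, `δ < β`) saying that some `k`-variant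
`c'` of `c` realizes `φ` with `rk⁰(c ∪ c') ≥ δ`; this adds at most `κ` symbols. If `rk¹ ≥ δ + 1`
holds in the expansion and `a` realizes `φ`, apply it to `φ ∧ ¬R_{φ,k,δ}`: by induction the
resulting pair `(b⁰, b¹)` has `rk⁰ ≥ δ`, so `R_{φ,k,δ}(b⁰)` holds, which is impossible. Hence
`R_{φ,k,δ}(a)`, which is the `l = 0` successor clause. As `Pr⁰` and `Pr¹` agree for every `λ`,
so do their least witnesses.
-/
open FirstOrder.Language

section Rank

variable {L : FirstOrder.Language.{u, u}} {M : Type u} [L.Structure M]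

lemma rkGe_zero (l : ℕ) (κ : Cardinal.{u}) : rkGe L M l κ 0 = rkBase L M κ :=
  Ordinal.limitRecOn_zero _ _ _

lemma rkGe_succ (l : ℕ) (κ : Cardinal.{u}) (β : Ordinal.{u}) :
    rkGe L M l κ (Order.succ β) = rkStep L M l κ (rkGe L M l κ β) :=
  Ordinal.limitRecOn_add_one _ _ _ _

lemma rkGe_limit (l : ℕ) (κ : Cardinal.{u}) {o : Ordinal.{u}} (ho : Order.IsSuccLimit o)
    (w : Set M) : rkGe L M l κ o w ↔ ∀ β < o, rkGe L M l κ β w := by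
  rw [rkGe, Ordinal.limitRecOn_limit _ _ _ _ ho]
  rfl

lemma rkGe_imp_rkGe {L' : FirstOrder.Language.{u, u}} [L'.Structure M] {l l' : ℕ}
    {κ : Cardinal.{u}} {β : Ordinal.{u}} (base : ∀ w, rkBase L M κ w → rkBase L' M κ w)
    (step : ∀ δ < β, (∀ w, rkGe L M l κ δ w → rkGe L' M l' κ δ w) →
      ∀ w, rkStep L M l κ (rkGe L M l κ δ) w → rkStep L' M l' κ (rkGe L' M l' κ δ) w) :
    ∀ γ ≤ β, ∀ w, rkGe L M l κ γ w → rkGe L' M l' κ γ w := by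
  intro γ
  induction γ using WellFoundedLT.induction with
  | _ γ IH =>
    intro hγ w
    rcases Ordinal.zero_or_succ_or_isSuccLimit γ with rfl | ⟨δ, rfl⟩ | hlim
    · rw [rkGe_zero, rkGe_zero]
      exact base w
    · have hδ : δ < β := Order.succ_le_iff.mp hγ
      rw [rkGe_succ, rkGe_succ]
      exact step δ hδ (IH δ (Order.lt_succ δ) hδ.le) w
    · rw [rkGe_limit l κ hlim, rkGe_limit l' κ hlim]
      exact fun h δ hδ => IH δ hδ (hδ.le.trans hγ) w (h δ hδ)

lemma rkStep_of_rkStep_zero (l : ℕ) {κ : Cardinal.{u}} {P Q : Set M → Prop}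
    (hPQ : ∀ w, P w → Q w) {w : Set M} (h : rkStep L M 0 κ P w) : rkStep L M l κ Q w := by
  obtain ⟨hfin, hne, H⟩ := h
  refine ⟨hfin, hne, fun n a inj ha k φ qf hφ => ?_⟩
  obtain ⟨b, hP, hb, hk, hm, hb₀⟩ := H n a inj ha k φ qf hφ
  exact ⟨b, hPQ _ hP, hb, hk, hm, fun _ => hb₀ rfl⟩

lemma rkGe_of_rkGe_zero (l : ℕ) {κ : Cardinal.{u}} {β : Ordinal.{u}} {w : Set M}
    (h : rkGe L M 0 κ β w) : rkGe L M l κ β w :=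
  rkGe_imp_rkGe (fun _ h => h) (fun _ _ ih _ => rkStep_of_rkStep_zero l ih) β le_rfl w h

end Rank

section Expansion

variable {L L' : FirstOrder.Language.{u, u}} {M : Type u} [L.Structure M] [L'.Structure M]

lemma isQF_onBoundedFormula (ρ : L →ᴸ L') {α : Type*} {n : ℕ}
    {φ : L.BoundedFormula α n} (h : φ.IsQF) : (ρ.onBoundedFormula φ).IsQF := by
  induction h with
  | falsum => exact BoundedFormula.isQF_bot
  | of_isAtomic h =>
    cases h with
    | equal t₁ t₂ => exact (BoundedFormula.IsAtomic.equal _ _).isQF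
    | rel R ts => exact (BoundedFormula.IsAtomic.rel _ _).isQF
  | imp _ _ ih₁ ih₂ => exact ih₁.imp ih₂

lemma clLt_subset_of_isExpansionOn (ρ : L →ᴸ L') [ρ.IsExpansionOn M] (κ : Cardinal.{u})
    (B : Set M) : clLt L M κ B ⊆ clLt L' M κ B := by
  rintro a ⟨n, φ, qf, b, hb, hφ, hcard⟩
  refine ⟨n, ρ.onFormula φ, isQF_onBoundedFormula ρ qf, b, hb, ?_, ?_⟩
  · rwa [LHom.realize_onFormula]
  · simpa only [LHom.realize_onFormula] using hcard

lemma rkBase_of_isExpansionOn (ρ : L →ᴸ L') [ρ.IsExpansionOn M] {κ : Cardinal.{u}}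
    {w : Set M} (h : rkBase L' M κ w) : rkBase L M κ w :=
  ⟨h.1, h.2.1, fun a ha hcl => h.2.2 a ha (clLt_subset_of_isExpansionOn ρ κ _ hcl)⟩

end Expansion

section Split

variable {L : FirstOrder.Language.{u, u}} {M : Type u} [L.Structure M]

/-- `c` together with some `Function.update c k y` is a pair as in the `l = 0` successor clause of
`rk⁰ ≥ δ + 1` for `φ` at coordinate `k`, provided `c` itself realizes `φ`. -/
def HasSplit (κ : Cardinal.{u}) (δ : Ordinal.{u}) {n : ℕ} (φ : L.Formula (Fin n)) (k : Fin n)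
    (c : Fin n → M) : Prop :=
  ∃ y, y ≠ c k ∧ φ.Realize (Function.update c k y) ∧ rkGe L M 0 κ δ (Set.range c ∪ {y})

lemma range_pair_eq_of_eq_update {n : ℕ} {b : Fin 2 → Fin n → M} {k : Fin n} {y : M}
    (hb : b 1 = Function.update (b 0) k y) :
    (Set.range fun p : Fin 2 × Fin n => b p.1 p.2) = Set.range (b 0) ∪ {y} := by
  ext x
  simp only [Set.mem_range, Prod.exists, Fin.exists_fin_two, hb, Set.mem_union,
    Set.mem_singleton_iff]
  constructor
  · rintro (⟨m, rfl⟩ | ⟨m, rfl⟩)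
    · exact Or.inl ⟨m, rfl⟩
    · by_cases hm : m = k
      · subst hm; simp
      · exact Or.inl ⟨m, (Function.update_of_ne hm y (b 0)).symm⟩
  · rintro (⟨m, rfl⟩ | rfl)
    · exact Or.inl ⟨m, rfl⟩
    · exact Or.inr ⟨k, by simp⟩

lemma rkStep_zero_of_hasSplit {κ : Cardinal.{u}} {δ : Ordinal.{u}} {w : Set M}
    (hfin : w.Finite) (hne : w.Nonempty)
    (h : ∀ (n : ℕ) (a : Fin n → M), Function.Injective a → Set.range a = w →
      ∀ (k : Fin n) (φ : L.Formula (Fin n)), φ.IsQF → φ.Realize a → HasSplit κ δ φ k a) :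
    rkStep L M 0 κ (rkGe L M 0 κ δ) w := by
  refine ⟨hfin, hne, fun n a inj ha k φ qf hφ => ?_⟩
  obtain ⟨y, hy, hφy, hrk⟩ := h n a inj ha k φ qf hφ
  refine ⟨![a, Function.update a k y], ?_, ?_, ?_, ?_, fun _ _ => rfl⟩
  · rwa [range_pair_eq_of_eq_update rfl]
  · exact Fin.forall_fin_two.mpr ⟨hφ, hφy⟩
  · simpa using hy.symm
  · intro m hm
    simp [Function.update_of_ne hm]

lemma hasSplit_of_pair {κ : Cardinal.{u}} {δ : Ordinal.{u}} {n : ℕ} {φ : L.Formula (Fin n)}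
    {k : Fin n} {b : Fin 2 → Fin n → M} (hk : b 0 k ≠ b 1 k) (hm : ∀ m, m ≠ k → b 0 m = b 1 m)
    (hφ : φ.Realize (b 1)) (hrk : rkGe L M 0 κ δ (Set.range fun p : Fin 2 × Fin n => b p.1 p.2)) :
    HasSplit κ δ φ k (b 0) := by
  have hb : b 1 = Function.update (b 0) k (b 1 k) := by
    funext m
    by_cases h : m = k
    · subst h; simp
    · simp [Function.update_of_ne h, hm m h]
  exact ⟨b 1 k, hk.symm, hb ▸ hφ, range_pair_eq_of_eq_update hb ▸ hrk⟩

end Split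

section SplitLanguage

/-- Relation symbols `R_{φ,k,i}`, to be read as `HasSplit κ (ρ i) φ k` for an indexing
`ρ : ι → Ordinal`. -/
def splitLang (L : FirstOrder.Language.{u, u}) (ι : Type u) : FirstOrder.Language.{u, u} where
  Functions _ := PEmpty
  Relations n := L.Formula (Fin n) × ULift.{u} (Fin n) × ι

variable {L : FirstOrder.Language.{u, u}} {M : Type u} [L.Structure M] {ι : Type u}

abbrev splitStructure (κ : Cardinal.{u}) (ρ : ι → Ordinal.{u}) : (splitLang L ι).Structure M where
  funMap f := PEmpty.elim f
  RelMap r c := HasSplit κ (ρ r.2.2) r.1 r.2.1.down c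

variable [(splitLang L ι).Structure M] {κ : Cardinal.{u}} {ρ : ι → Ordinal.{u}}

lemma rkGe_zero_of_rkGe_one_sum
    (hR : ∀ {n} (r : (splitLang L ι).Relations n) (c : Fin n → M),
      Structure.RelMap r c ↔ HasSplit κ (ρ r.2.2) r.1 r.2.1.down c)
    {β : Ordinal.{u}} (hρ : ∀ δ < β, ∃ i, ρ i = δ) :
    ∀ γ ≤ β, ∀ w, rkGe (L.sum (splitLang L ι)) M 1 κ γ w → rkGe L M 0 κ γ w := by
  refine rkGe_imp_rkGe (fun _ => rkBase_of_isExpansionOn LHom.sumInl) ?_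
  rintro δ hδ ih w ⟨hfin, hne, H⟩
  obtain ⟨i, rfl⟩ := hρ δ hδ
  refine rkStep_zero_of_hasSplit hfin hne fun n a inj ha k φ qf hφ => ?_
  by_contra hsplit
  let r : (splitLang L ι).Relations n := (φ, ⟨k⟩, i)
  let ψ : (L.sum (splitLang L ι)).Formula (Fin n) :=
    LHom.sumInl.onFormula φ ⊓ ∼(Relations.formula (Sum.inr r) Term.var)
  have hψ : ∀ c : Fin n → M, ψ.Realize c ↔ φ.Realize c ∧ ¬ HasSplit κ (ρ i) φ k c := fun c => by
    simp only [ψ, Formula.realize_inf, Formula.realize_not, LHom.realize_onFormula]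
    exact and_congr_right' (not_congr (hR r c))
  have qfψ : ψ.IsQF :=
    (isQF_onBoundedFormula _ qf).inf (BoundedFormula.IsAtomic.rel _ _).isQF.not
  obtain ⟨b, hrk, hb, hk, hm, -⟩ := H n a inj ha k ψ qfψ ((hψ a).2 ⟨hφ, hsplit⟩)
  exact ((hψ _).1 (hb 0)).2 (hasSplit_of_pair hk hm ((hψ _).1 (hb 1)).1 (ih _ hrk))

end SplitLanguage

section Cardinality

variable {κ : Cardinal.{u}}

lemma mk_sigma_nat_le (hκ : ℵ₀ ≤ κ) {f : ℕ → Type u} (hf : ∀ n, #(f n) ≤ κ) :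
    #(Σ n, f n) ≤ κ :=
  calc #(Σ n, f n) ≤ sum fun _ : ℕ => κ := (mk_sigma f).trans_le (sum_le_sum _ _ hf)
    _ = κ := by simp [aleph0_mul_eq hκ]

lemma mk_formula_le (hκ : ℵ₀ ≤ κ) {L : FirstOrder.Language.{u, u}} (hL : L.card ≤ κ) (n : ℕ) :
    #(L.Formula (Fin n)) ≤ κ := by
  have hfin : lift.{u} #(Fin n) ≤ κ := by simpa using (natCast_lt_aleph0 (n := n)).le.trans hκ
  calc #(L.Formula (Fin n)) ≤ #(Σ m, L.BoundedFormula (Fin n) m) :=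
        mk_le_of_injective (f := Sigma.mk 0) sigma_mk_injective
    _ ≤ max ℵ₀ (lift.{u} #(Fin n) + lift.{0} L.card) := BoundedFormula.card_le
    _ ≤ κ := max_le hκ ((add_le_add hfin (by simpa using hL)).trans (add_eq_self hκ).le)

lemma card_sum_splitLang_le (hκ : ℵ₀ ≤ κ) {L : FirstOrder.Language.{u, u}} (hL : L.card ≤ κ)
    {ι : Type u} (hι : #ι ≤ κ) : (L.sum (splitLang L ι)).card ≤ κ := by
  have hrel : ∀ n, #((splitLang L ι).Relations n) ≤ κ := fun n => by
    have hfin : #(ULift.{u} (Fin n)) ≤ κ := by simpa using (natCast_lt_aleph0 (n := n)).le.trans hκ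
    simp only [splitLang, mk_prod, lift_id]
    exact (mul_le_mul' (mk_formula_le hκ hL n) (mul_le_mul' hfin hι)).trans
      (by rw [mul_eq_self hκ, mul_eq_self hκ])
  have hsplit : (splitLang L ι).card ≤ κ := by
    rw [card, Symbols, mk_sum, lift_id, lift_id]
    have hfun : #(Σ n, (splitLang L ι).Functions n) = 0 :=
      mk_eq_zero_iff.mpr ⟨fun f => PEmpty.elim f.2⟩
    rw [hfun, zero_add]
    exact mk_sigma_nat_le hκ hrel
  rw [card_sum, lift_id, lift_id]
  exact (add_le_add hL hsplit).trans (add_eq_self hκ).le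

end Cardinality

section Pr

variable {α : Ordinal.{u}} {lam bound θ : Cardinal.{u}}

lemma Pr_of_Pr_zero (l : ℕ) (h : Pr 0 α lam bound θ) : Pr l α lam bound θ :=
  fun L M _ hM hL β hβ =>
    (h L M _ hM hL β hβ).imp fun _ ⟨hfin, hne, hrk⟩ => ⟨hfin, hne, rkGe_of_rkGe_zero l hrk⟩

lemma Pr_zero_of_Pr_one (hθ : ℵ₀ ≤ θ) (hα : α ≤ (Order.succ θ).ord) (h : Pr 1 α lam bound θ) :
    Pr 0 α lam bound θ := by
  intro L M _ hM hL β hβ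
  have hβθ : #β.ToType ≤ θ := by
    rw [Cardinal.mk_toType]
    exact Order.lt_succ_iff.mp (Cardinal.lt_ord.mp (hβ.trans_le hα))
  let ρ (i : β.ToType) : Ordinal.{u} := Ordinal.ToType.mk.symm i
  let := splitStructure (L := L) (M := M) bound ρ
  obtain ⟨w, hfin, hne, hrk⟩ :=
    h _ M inferInstance hM (card_sum_splitLang_le hθ hL hβθ) β hβ
  refine ⟨w, hfin, hne, rkGe_zero_of_rkGe_one_sum (ρ := ρ) (fun _ _ => Iff.rfl) ?_ β le_rfl w hrk⟩
  exact fun δ hδ => ⟨Ordinal.ToType.mk ⟨δ, hδ⟩, by simp [ρ]⟩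

lemma Pr_zero_iff_Pr_one (hθ : ℵ₀ ≤ θ) (hα : α ≤ (Order.succ θ).ord) :
    Pr 0 α lam bound θ ↔ Pr 1 α lam bound θ :=
  ⟨Pr_of_Pr_zero 1, Pr_zero_of_Pr_one hθ hα⟩

end Pr

theorem stmt_2_general (κ : Cardinal.{u}) (hκ : ℵ₀ ≤ κ)
    (lam : Cardinal.{u})
    (α : Ordinal.{u}) (hα : α ≤ (Order.succ κ).ord) :
    (Pr 0 α lam (Order.succ κ) κ ↔ Pr 1 α lam (Order.succ κ) κ) ∧
    sInf {μ : Cardinal.{u} | Pr 0 α μ (Order.succ κ) κ} =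
      sInf {μ : Cardinal.{u} | Pr 1 α μ (Order.succ κ) κ} := by
  simp only [Pr_zero_iff_Pr_one hκ hα, and_self]

/-- for infinite `κ`, `λ ≥ κ` and `α ≤ κ⁺`,
`Pr⁰_α(λ; <κ⁺, κ) ↔ Pr¹_α(λ; <κ⁺, κ)`, and consequently
`λ⁰_α(κ) = λ¹_α(κ)` where `λ^l_α(κ) = min {λ : Pr^l_α(λ; <κ⁺, κ)}`. -/
theorem stmt_2 (κ : Cardinal.{u}) (hκ : ℵ₀ ≤ κ)
    (lam : Cardinal.{u}) (hlam : κ ≤ lam)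
    (α : Ordinal.{u}) (hα : α ≤ (Order.succ κ).ord) :
    (Pr 0 α lam (Order.succ κ) κ ↔ Pr 1 α lam (Order.succ κ) κ) ∧
    sInf {μ : Cardinal.{u} | Pr 0 α μ (Order.succ κ) κ} =
      sInf {μ : Cardinal.{u} | Pr 1 α μ (Order.succ κ) κ} :=
  stmt_2_general κ hκ lam α hα

end Sh522
end

section
/- Let κ be an infinite cardinal and λ a cardinal such that Pr_{κ⁺}(λ; κ) holds (every model with universe λ and vocabulary of cardinality ≤ κ has rk⁰(M; <κ⁺) ≥ κ⁺). If T is a (2,2,κ)-tree and the κ-Souslin set prjlim(T) ⊆ 2^ω × 2^ω contains a λ-square A × A with A ⊆ 2^ω of cardinality λ, then prjlim(T) contains a perfect square P × P with P ⊆ 2^ω a nonempty perfect set. -/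
open FirstOrder Cardinal

universe u

namespace Sh522

/-- A `(2,2,κ)`-tree (with `κ` represented by the index type `ι`): a set of
triples `(σ, τ, ρ)` with `σ, τ ∈ 2^n`, `ρ ∈ ι^n`, closed under restriction. -/
structure Tree22 (ι : Type) : Type 1 where
  mem : ∀ n : ℕ, Set ((Fin n → Bool) × (Fin n → Bool) × (Fin n → ι))
  closed : ∀ (n : ℕ) (x : (Fin n → Bool) × (Fin n → Bool) × (Fin n → ι)),
    x ∈ mem n → ∀ (m : ℕ) (h : m ≤ n),
      ((fun i => x.1 (Fin.castLE h i)), (fun i => x.2.1 (Fin.castLE h i)),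
        (fun i => x.2.2 (Fin.castLE h i))) ∈ mem m

/-- The `κ`-Souslin set projected from a `(2,2,κ)`-tree:
`prjlim T = {(η,ν) : ∃ ρ ∈ ι^ω, ∀ n, (η↾n, ν↾n, ρ↾n) ∈ T}`. -/
def prjlim {ι : Type} (T : Tree22 ι) : Set ((ℕ → Bool) × (ℕ → Bool)) :=
  {p | ∃ ρ : ℕ → ι, ∀ n : ℕ,
    ((fun i : Fin n => p.1 i), (fun i : Fin n => p.2 i), (fun i : Fin n => ρ i)) ∈ T.mem n}

/-!
Code `A` as a relational structure: a relation symbol of arity `n` prescribes finitely many digits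
of reals `x₁, …, xₙ ∈ A` and of fixed witnesses `ρ(xᵢ, xⱼ) ∈ ι^ω` for `(xᵢ, xⱼ) ∈ prjlim T`; there
are only `κ` symbols. If a finite set `w` has rank `≥ γ + 1`, any point of `w` has a twin outside
`w` satisfying the same quantifier-free formulas over `w`, and `w` plus the twin has rank `≥ γ`.

As the rank reaches every `γ < κ⁺`, build level by level a binary tree of finite approximations
(digits of the reals at the nodes, digits of the witnesses at pairs of nodes) realized at every rank
below `κ⁺`: twinning all nodes doubles the tree, and since `κ⁺` is regular while there are only `κ`
approximations, one of them is realized at cofinally many ranks. Along branches the digits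
converge to a continuous injection of Cantor space, whose range `P` is perfect; along pairs of
branches that have split (or coincide) the witnesses converge to branches of `T`, so
`P × P ⊆ prjlim T`.
-/

open Function Set Filter Topology

section Rank

variable {L : FirstOrder.Language.{u, u}} {M : Type u} [L.Structure M] {l : ℕ}
  {bound : Cardinal.{u}}

theorem rkGe_add_one (β : Ordinal.{u}) :
    rkGe L M l bound (β + 1) = rkStep L M l bound (rkGe L M l bound β) :=
  Ordinal.limitRecOn_add_one _ _ _ _

theorem rkGe_of_isSuccLimit {β γ : Ordinal.{u}} (hβ : Order.IsSuccLimit β) (hγ : γ < β)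
    {w : Set M} (hw : rkGe L M l bound β w) : rkGe L M l bound γ w := by
  unfold rkGe at hw ⊢
  rw [Ordinal.limitRecOn_limit _ _ _ _ hβ] at hw
  exact hw γ hγ

end Rank

/-- The relation symbols of arity `n` are indexed by a length `m` and tables prescribing the first
`m` digits of the reals and of the witnesses attached to an `n`-tuple. -/
def codeLang (ι : Type u) : FirstOrder.Language.{u, u} where
  Functions _ := PEmpty
  Relations n := Σ m : ℕ, (Fin n → Fin m → Bool) × (Fin n → Fin n → Fin m → ι)

section Coding

variable {ι M : Type u} (q : M → ℕ → Bool) (p : M → M → ℕ → ι)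

abbrev codeStructure : (codeLang ι).Structure M where
  funMap f _ := PEmpty.elim f
  RelMap {n} R x := Injective x ∧
    ∀ (i j : Fin n) (k : Fin R.1), q (x i) k = R.2.1 i k ∧ p (x i) (x j) k = R.2.2 i j k

def codeRkGe (bound : Cardinal.{u}) (γ : Ordinal.{u}) : Set M → Prop :=
  @rkGe (codeLang ι) M (codeStructure q p) 0 bound γ

def PreservesUpTo (m : ℕ) (f : M → M) (w : Set M) : Prop :=
  ∀ d ∈ w, ∀ d' ∈ w, ∀ k < m, q (f d) k = q d k ∧ p (f d) (f d') k = p d d' k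

variable {q p} {m : ℕ}

theorem preservesUpTo_id (w : Set M) : PreservesUpTo q p m id w :=
  fun _ _ _ _ _ _ => ⟨rfl, rfl⟩

theorem PreservesUpTo.congr {f f' : M → M} {w : Set M} (h : PreservesUpTo q p m f w)
    (hff' : EqOn f f' w) : PreservesUpTo q p m f' w := by
  intro d hd d' hd' k hk
  rw [← hff' hd, ← hff' hd']
  exact h d hd d' hd' k hk

theorem PreservesUpTo.comp {f₁ f₂ : M → M} {w₁ w₂ : Set M} (h₂ : PreservesUpTo q p m f₂ w₂)
    (h₁ : PreservesUpTo q p m f₁ w₁) (hmaps : MapsTo f₁ w₁ w₂) :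
    PreservesUpTo q p m (f₂ ∘ f₁) w₁ := by
  intro d hd d' hd' k hk
  obtain ⟨hq₂, hp₂⟩ := h₂ _ (hmaps hd) _ (hmaps hd') k hk
  obtain ⟨hq₁, hp₁⟩ := h₁ d hd d' hd' k hk
  exact ⟨hq₂.trans hq₁, hp₂.trans hp₁⟩

variable (q p) in
def codeFormula {n : ℕ} (m : ℕ) (a : Fin n → M) : (codeLang ι).Formula (Fin n) :=
  Language.Relations.formula
    (⟨m, fun i k => q (a i) k, fun i j k => p (a i) (a j) k⟩ : (codeLang ι).Relations n)
    (fun i => Language.Term.var i)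

theorem isQF_codeFormula {n : ℕ} (a : Fin n → M) : (codeFormula q p m a).IsQF :=
  (Language.BoundedFormula.IsAtomic.rel _ _).isQF

theorem realize_codeFormula {n : ℕ} (a v : Fin n → M) :
    @Language.Formula.Realize _ M (codeStructure q p) _ (codeFormula q p m a) v ↔
      Injective v ∧ ∀ (i j : Fin n) (k : Fin m),
        q (v i) k = q (a i) k ∧ p (v i) (v j) k = p (a i) (a j) k := by
  let := codeStructure q p
  exact Iff.rfl

theorem range_uncurry_eq_insert {M : Type*} {n : ℕ} {b : Fin 2 → Fin n → M} {k : Fin n}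
    (h : ∀ j, j ≠ k → b 1 j = b 0 j) :
    range (fun x : Fin 2 × Fin n => b x.1 x.2) = insert (b 1 k) (range (b 0)) := by
  ext x
  simp only [mem_insert_iff, mem_range, Prod.exists, Fin.exists_fin_two]
  constructor
  · rintro (⟨j, rfl⟩ | ⟨j, rfl⟩)
    · exact Or.inr ⟨j, rfl⟩
    · rcases eq_or_ne j k with rfl | hjk
      · exact Or.inl rfl
      · exact Or.inr ⟨j, (h j hjk).symm⟩
  · rintro (rfl | ⟨j, rfl⟩)
    · exact Or.inr ⟨k, rfl⟩
    · exact Or.inl ⟨j, rfl⟩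

theorem exists_twin_of_codeRkGe_add_one [DecidableEq M] {bound : Cardinal.{u}}
    {γ : Ordinal.{u}} {w : Set M} {c : M} (hc : c ∈ w) (m : ℕ)
    (h : codeRkGe q p bound (γ + 1) w) :
    ∃ c' ∉ w, codeRkGe q p bound γ (insert c' w) ∧ PreservesUpTo q p m (update id c c') w := by
  let := codeStructure q p
  obtain ⟨hfin, -, hstep⟩ := (rkGe_add_one γ).le _ h
  obtain ⟨n, a, rfl⟩ := hfin.fin_embedding
  obtain ⟨k, rfl⟩ := hc
  obtain ⟨b, hrk, hreal, hne, hsame, hb0⟩ := hstep n a a.injective rfl k (codeFormula q p m a)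
    (isQF_codeFormula a) ((realize_codeFormula a a).2 ⟨a.injective, fun _ _ _ => ⟨rfl, rfl⟩⟩)
  have hb0 : b 0 = a := funext (hb0 rfl)
  obtain ⟨hinj, hagree⟩ := (realize_codeFormula a (b 1)).1 (hreal 1)
  have hb1 : ∀ j, j ≠ k → b 1 j = a j := fun j hj => (hsame j hj).symm.trans (congrFun hb0 j)
  have htwin : ∀ j, update id (a k) (b 1 k) (a j) = b 1 j := by
    intro j
    rcases eq_or_ne j k with rfl | hj
    · exact update_self _ _ _
    · rw [update_of_ne (a.injective.ne hj), hb1 j hj, id]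
  refine ⟨b 1 k, ?_, ?_, ?_⟩
  · rintro ⟨j, hj⟩
    rcases eq_or_ne j k with rfl | hjk
    · exact hne ((congrFun hb0 j).trans hj)
    · exact hjk (hinj ((hb1 j hjk).trans hj))
  · rwa [range_uncurry_eq_insert (hb0 ▸ hb1), hb0] at hrk
  · rintro _ ⟨i, rfl⟩ _ ⟨j, rfl⟩ l hl
    rw [htwin, htwin]
    exact hagree i j ⟨l, hl⟩

theorem preservesUpTo_of_twin [DecidableEq M] {w : Set M} {l : Finset M} {c c' : M} {g : M → M}
    (hc : c ∈ w) (hc' : c' ∉ w) (hcl : c ∉ l)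
    (htwin : PreservesUpTo q p m (update id c c') w)
    (hg : ∀ f : M → M, (∀ d ∈ insert c' w, f d = d ∨ (d ∈ l ∧ f d = g d)) →
      PreservesUpTo q p m f (insert c' w))
    (f : M → M) (hf : ∀ d ∈ w, f d = d ∨ (d ∈ insert c l ∧ f d = update g c c' d)) :
    PreservesUpTo q p m f w := by
  have hc'c : c' ≠ c := fun h => hc' (h ▸ hc)
  have hfc : f c = c ∨ f c = c' := by
    simpa using (hf c hc).imp_right And.right
  -- `f` is `update id c (f c)` followed by a map that moves only points of `l`.
  have hfirst : PreservesUpTo q p m (update id c (f c)) w := by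
    rcases hfc with hfc | hfc
    · rw [hfc]
      exact (preservesUpTo_id w).congr fun d _ => congrFun (update_eq_self c id).symm d
    · rwa [hfc]
  have hmaps : MapsTo (update id c (f c)) w (insert c' w) := by
    intro d hd
    rcases eq_or_ne d c with rfl | hdc
    · rw [update_self]
      rcases hfc with hfc | hfc <;> rw [hfc]
      exacts [mem_insert_of_mem _ hd, mem_insert _ _]
    · rw [update_of_ne hdc]
      exact mem_insert_of_mem _ hd
  have hsecond : PreservesUpTo q p m (update (update f c' c') c c) (insert c' w) := by
    refine hg _ fun d hd => ?_
    rcases eq_or_ne d c with rfl | hdc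
    · exact Or.inl (update_self _ _ _)
    rw [update_of_ne hdc]
    rcases eq_or_ne d c' with rfl | hdc'
    · exact Or.inl (update_self _ _ _)
    rw [update_of_ne hdc']
    have hdw : d ∈ w := (mem_insert_iff.1 hd).resolve_left hdc'
    refine (hf d hdw).imp_right fun ⟨hdl, hfd⟩ => ?_
    exact ⟨(Finset.mem_insert.1 hdl).resolve_left hdc, hfd.trans (update_of_ne hdc _ _)⟩
  refine (hsecond.comp hfirst hmaps).congr fun d hd => ?_
  rcases eq_or_ne d c with rfl | hdc
  · rcases hfc with hfc | hfc <;> simp [hfc, hc'c]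
  · have hdc' : d ≠ c' := fun h => hc' (h ▸ hd)
    simp [update_of_ne hdc, hdc']

theorem exists_twins_of_codeRkGe [DecidableEq M] {bound : Cardinal.{u}} (m : ℕ) (l : Finset M) :
    ∀ {w : Set M} {γ : Ordinal.{u}}, ↑l ⊆ w → codeRkGe q p bound (γ + l.card) w →
      ∃ (w' : Set M) (g : M → M), w ⊆ w' ∧ codeRkGe q p bound γ w' ∧
        (∀ c ∈ l, g c ∈ w' \ w) ∧ InjOn g l ∧
        ∀ f : M → M, (∀ d ∈ w, f d = d ∨ (d ∈ l ∧ f d = g d)) → PreservesUpTo q p m f w := by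
  induction l using Finset.induction_on with
  | empty =>
    intro w γ _ h
    refine ⟨w, id, subset_rfl, by simpa using h, by simp, by simp, fun f hf => ?_⟩
    exact (preservesUpTo_id w).congr fun d hd => ((hf d hd).resolve_right (by simp)).symm
  | @insert c l hcl ih =>
    intro w γ hlw h
    rw [Finset.card_insert_of_notMem hcl, Nat.cast_succ, ← add_assoc] at h
    rw [Finset.coe_insert, insert_subset_iff] at hlw
    obtain ⟨c', hc'w, hrk, htwin⟩ := exists_twin_of_codeRkGe_add_one hlw.1 m h
    obtain ⟨w', g, hww', hrk', hgmem, hginj, hgpres⟩ :=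
      ih (hlw.2.trans (subset_insert _ _)) hrk
    have hgc' : ∀ d ∈ l, g d ≠ c' := fun d hd h => (hgmem d hd).2 (h ▸ mem_insert c' w)
    have hdc : ∀ d ∈ l, d ≠ c := fun d hd h => hcl (h ▸ hd)
    refine ⟨w', update g c c', (subset_insert _ _).trans hww', hrk', ?_, ?_, ?_⟩
    · intro d hd
      rcases Finset.mem_insert.1 hd with rfl | hd
      · rw [update_self]
        exact ⟨hww' (mem_insert _ _), hc'w⟩
      · rw [update_of_ne (hdc d hd)]
        exact ⟨(hgmem d hd).1, fun h => (hgmem d hd).2 (mem_insert_of_mem _ h)⟩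
    · rw [Finset.coe_insert, injOn_insert (by simpa using hcl), update_self]
      refine ⟨hginj.congr fun d hd => (update_of_ne (hdc d hd) _ _).symm, ?_⟩
      rintro ⟨d, hd, hgd⟩
      rw [update_of_ne (hdc d hd)] at hgd
      exact hgc' d hd hgd
    · exact preservesUpTo_of_twin hlw.1 hc'w hcl htwin hgpres

end Coding

theorem eventually_injective_restrict {J α : Type*} [Finite J] {f : J → ℕ → α}
    (hf : Injective f) : ∀ᶠ N in atTop, Injective fun j (k : Fin N) => f j k := by
  have hpair : ∀ i j, ∀ᶠ N in atTop, (∀ k : Fin N, f i k = f j k) → i = j := by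
    intro i j
    rcases eq_or_ne i j with hij | hij
    · exact Eventually.of_forall fun _ _ => hij
    obtain ⟨k, hk⟩ := Function.ne_iff.1 (hf.ne hij)
    filter_upwards [eventually_gt_atTop k] with N hN h
    exact absurd (h ⟨k, hN⟩) hk
  filter_upwards [eventually_all.2 fun i => eventually_all.2 (hpair i)] with N hN i j h
  exact hN i j fun k => congrFun h k

def FinPrefix {α : Type*} {m m' : ℕ} (f : Fin m → α) (f' : Fin m' → α) : Prop :=
  ∀ k (hk : k < m) (hk' : k < m'), f' ⟨k, hk'⟩ = f ⟨k, hk⟩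

/-- Level `s` of the perfect tree under construction: `real u` and `wit u v` are the first `len`
digits of the real at the node `u` and of the witness for the pair of nodes `(u, v)`. -/
structure Approx (ι : Type u) (s : ℕ) where
  len : ℕ
  real : (Fin s → Bool) → Fin len → Bool
  wit : (Fin s → Bool) → (Fin s → Bool) → Fin len → ι

namespace Approx

variable {ι M : Type u} {s : ℕ}

structure Refines (d : Approx ι s) (d' : Approx ι (s + 1)) : Prop where
  len_lt : d.len < d'.len
  real_prefix : ∀ u i, FinPrefix (d.real u) (d'.real (Fin.snoc u i))
  wit_prefix : ∀ u v i j, (u ≠ v ∨ i = j) →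
    FinPrefix (d.wit u v) (d'.wit (Fin.snoc u i) (Fin.snoc v j))
  injective_real : Injective d'.real

variable (q : M → ℕ → Bool) (p : M → M → ℕ → ι)

def IsRealizedBy (d : Approx ι s) (x : (Fin s → Bool) → M) : Prop :=
  ∀ u v (k : Fin d.len), q (x u) k = d.real u k ∧ p (x u) (x v) k = d.wit u v k

def RealizedAtRank (bound : Cardinal.{u}) (d : Approx ι s) (γ : Ordinal.{u}) : Prop :=
  ∃ (w : Set M) (x : (Fin s → Bool) → M),
    Injective x ∧ range x ⊆ w ∧ codeRkGe q p bound γ w ∧ d.IsRealizedBy q p x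

variable {q p} {bound : Cardinal.{u}}

theorem RealizedAtRank.of_isSuccLimit {d : Approx ι s} {β γ : Ordinal.{u}}
    (h : d.RealizedAtRank q p bound β) (hβ : Order.IsSuccLimit β) (hγ : γ < β) :
    d.RealizedAtRank q p bound γ := by
  let := codeStructure q p
  obtain ⟨w, x, hx, hxw, hrk, hreal⟩ := h
  exact ⟨w, x, hx, hxw, rkGe_of_isSuccLimit hβ hγ hrk, hreal⟩

def doubleNodes (x : (Fin s → Bool) → M) (g : M → M) : (Fin (s + 1) → Bool) → M :=
  fun u => bif u (Fin.last s) then g (x (Fin.init u)) else x (Fin.init u)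

section DoubleNodes

variable {x : (Fin s → Bool) → M} {g : M → M}

@[simp]
theorem doubleNodes_snoc (u : Fin s → Bool) (i : Bool) :
    doubleNodes x g (Fin.snoc u i) = bif i then g (x u) else x u := by
  simp [doubleNodes]

theorem doubleNodes_snoc_eq_or [DecidableEq M] {l : Finset M} (hxl : ∀ u, x u ∈ l)
    (u : Fin s → Bool) (i : Bool) :
    doubleNodes x g (Fin.snoc u i) = x u ∨
      (x u ∈ l ∧ doubleNodes x g (Fin.snoc u i) = g (x u)) := by
  cases i
  exacts [Or.inl (doubleNodes_snoc u false), Or.inr ⟨hxl u, doubleNodes_snoc u true⟩]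

theorem range_doubleNodes_subset {w : Set M} (hx : range x ⊆ w) (hg : ∀ u, g (x u) ∈ w) :
    range (doubleNodes x g) ⊆ w := by
  rintro _ ⟨u, rfl⟩
  rw [← Fin.snoc_init_self u, doubleNodes_snoc]
  cases u (Fin.last s)
  exacts [hx (mem_range_self _), hg _]

theorem injective_doubleNodes (hx : Injective x) (hg : InjOn g (range x))
    (hgx : ∀ u v, g (x u) ≠ x v) : Injective (doubleNodes x g) := by
  suffices ∀ u v i j, doubleNodes x g (Fin.snoc u i) = doubleNodes x g (Fin.snoc v j) →
      u = v ∧ i = j by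
    intro u v huv
    rw [← Fin.snoc_init_self u, ← Fin.snoc_init_self v] at huv ⊢
    obtain ⟨h₁, h₂⟩ := this _ _ _ _ huv
    rw [h₁, h₂]
  intro u v i j huv
  rw [doubleNodes_snoc, doubleNodes_snoc] at huv
  cases i <;> cases j <;> simp only [cond_false, cond_true] at huv
  · exact ⟨hx huv, rfl⟩
  · exact absurd huv.symm (hgx v u)
  · exact absurd huv (hgx u v)
  · exact ⟨hx (hg (mem_range_self u) (mem_range_self v) huv), rfl⟩

/-- A pair of nodes `(snoc u i, snoc v j)` with `u ≠ v` or `i = j` is the image of `(u, v)` under a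
single map that fixes or twins each point, so it carries the same digits as `(x u, x v)`. -/
theorem doubleNodes_preservesUpTo [DecidableEq M] {m : ℕ} {w : Set M} {l : Finset M}
    (hx : Injective x) (hxw : range x ⊆ w) (hxl : ∀ u, x u ∈ l)
    (hg : ∀ f : M → M, (∀ d ∈ w, f d = d ∨ (d ∈ l ∧ f d = g d)) → PreservesUpTo q p m f w)
    (u v : Fin s → Bool) (i j : Bool) (huv : u ≠ v ∨ i = j) (k : ℕ) (hk : k < m) :
    q (doubleNodes x g (Fin.snoc u i)) k = q (x u) k ∧
      p (doubleNodes x g (Fin.snoc u i)) (doubleNodes x g (Fin.snoc v j)) k = p (x u) (x v) k := by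
  set y := doubleNodes x g
  let f : M → M := fun z => if z = x u then y (Fin.snoc u i) else
    if z = x v then y (Fin.snoc v j) else z
  have hfu : f (x u) = y (Fin.snoc u i) := if_pos rfl
  have hfv : f (x v) = y (Fin.snoc v j) := by
    rcases eq_or_ne u v with rfl | huv'
    · rw [hfu, huv.resolve_left (not_not.2 rfl)]
    · exact (if_neg (hx.ne huv').symm).trans (if_pos rfl)
  have hf : ∀ z ∈ w, f z = z ∨ (z ∈ l ∧ f z = g z) := by
    intro z _
    by_cases hzu : z = x u
    · subst hzu
      rw [hfu]
      exact doubleNodes_snoc_eq_or hxl u i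
    by_cases hzv : z = x v
    · subst hzv
      rw [hfv]
      exact doubleNodes_snoc_eq_or hxl v j
    exact Or.inl ((if_neg hzu).trans (if_neg hzv))
  rw [← hfu, ← hfv]
  exact hg f hf _ (hxw (mem_range_self u)) _ (hxw (mem_range_self v)) k hk

end DoubleNodes

theorem RealizedAtRank.exists_refines [DecidableEq M] (hq : Injective q) {d : Approx ι s}
    {γ : Ordinal.{u}} (h : d.RealizedAtRank q p bound (γ + Fintype.card (Fin s → Bool))) :
    ∃ d' : Approx ι (s + 1), d.Refines d' ∧ d'.RealizedAtRank q p bound γ := by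
  obtain ⟨w, x, hx, hxw, hrk, hreal⟩ := h
  set l := Finset.univ.image x
  have hxl : ∀ u, x u ∈ l := fun u => Finset.mem_image_of_mem x (Finset.mem_univ u)
  have hlw : ↑l ⊆ w := by simpa [l] using hxw
  rw [← Finset.card_univ, ← Finset.card_image_of_injective _ hx] at hrk
  obtain ⟨w', g, hww', hrk', hgmem, hginj, hgpres⟩ := exists_twins_of_codeRkGe d.len l hlw hrk
  have hy_inj : Injective (doubleNodes x g) := by
    refine injective_doubleNodes hx (hginj.mono (by simp [l])) fun u v h => ?_
    exact (hgmem _ (hxl u)).2 (h ▸ hxw (mem_range_self v))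
  have hyw' : range (doubleNodes x g) ⊆ w' :=
    range_doubleNodes_subset (hxw.trans hww') fun u => (hgmem _ (hxl u)).1
  have hy := doubleNodes_preservesUpTo hx hxw hxl hgpres
  obtain ⟨m, hm, hsep⟩ :=
    ((eventually_gt_atTop d.len).and (eventually_injective_restrict (hq.comp hy_inj))).exists
  refine ⟨⟨m, fun u k => q (doubleNodes x g u) k, fun u v k => p (doubleNodes x g u)
    (doubleNodes x g v) k⟩, ⟨hm, ?_, ?_, hsep⟩, w', _, hy_inj, hyw', hrk', fun _ _ _ => ⟨rfl, rfl⟩⟩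
  · intro u i k hk _
    exact (hy u u i i (Or.inr rfl) k hk).1.trans (hreal u u ⟨k, hk⟩).1
  · intro u v i j huv k hk _
    exact (hy u v i j huv k hk).2.trans (hreal u v ⟨k, hk⟩).2

end Approx

section Cardinality

variable {κ : Cardinal.{u}}

theorem mk_arrow_le_of_finite (hκ : ℵ₀ ≤ κ) {J : Type} {X : Type u} [Finite J] (hX : #X ≤ κ) :
    #(J → X) ≤ κ := by
  cases nonempty_fintype J
  rw [mk_arrow, lift_uzero, mk_fintype J, lift_natCast]
  exact (power_le_power_right hX).trans (power_nat_le hκ)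

theorem sum_nat_le (hκ : ℵ₀ ≤ κ) {f : ℕ → Cardinal.{u}} (hf : ∀ n, f n ≤ κ) : sum f ≤ κ :=
  calc sum f ≤ sum fun _ => κ := sum_le_sum _ _ hf
    _ = ℵ₀ * κ := by simp
    _ ≤ κ := mul_le_of_le hκ hκ le_rfl

theorem mk_finTables_le (hκ : ℵ₀ ≤ κ) {ι : Type u} (hι : #ι ≤ κ) (J : Type) [Finite J] :
    #(Σ m : ℕ, (J → Fin m → Bool) × (J → J → Fin m → ι)) ≤ κ := by
  rw [mk_sigma]
  refine sum_nat_le hκ fun m => ?_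
  rw [mk_prod, lift_uzero]
  refine mul_le_of_le hκ ((lift_lt_aleph0.2 (lt_aleph0_of_finite _)).le.trans hκ) ?_
  exact mk_arrow_le_of_finite hκ (mk_arrow_le_of_finite hκ (mk_arrow_le_of_finite hκ hι))

theorem card_codeLang_le (hκ : ℵ₀ ≤ κ) {ι : Type u} (hι : #ι ≤ κ) : (codeLang ι).card ≤ κ := by
  rw [FirstOrder.Language.card_eq_card_functions_add_card_relations]
  simp only [codeLang, mk_eq_zero, lift_zero, sum_const, mul_zero, zero_add, lift_id]
  exact sum_nat_le hκ fun n => mk_finTables_le hκ hι (Fin n)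

theorem Approx.mk_le (hκ : ℵ₀ ≤ κ) {ι : Type u} (hι : #ι ≤ κ) (s : ℕ) : #(Approx ι s) ≤ κ := by
  refine le_trans (mk_le_of_injective (f := fun d : Approx ι s =>
    (⟨d.len, d.real, d.wit⟩ : Σ m : ℕ, (_ → Fin m → Bool) × (_ → _ → Fin m → ι))) ?_)
    (mk_finTables_le hκ hι (Fin s → Bool))
  rintro ⟨m, r, w⟩ ⟨m', r', w'⟩ h
  obtain ⟨rfl, h⟩ := Sigma.mk.inj_iff.1 h
  obtain ⟨rfl, rfl⟩ := Prod.ext_iff.1 (eq_of_heq h)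
  rfl

end Cardinality

theorem exists_cofinal_isSuccLimit_fiber {κ : Cardinal.{u}} (hκ : ℵ₀ ≤ κ) {β : Type u}
    (hβ : #β ≤ κ) (F : ∀ γ < (Order.succ κ).ord, β) :
    ∃ b, ∀ δ < (Order.succ κ).ord, ∃ (γ : Ordinal) (hγ : γ < (Order.succ κ).ord),
      δ < γ ∧ Order.IsSuccLimit γ ∧ F γ hγ = b := by
  by_contra! H
  choose δ hδ hF using H
  have hsucc : ℵ₀ < Order.succ κ := hκ.trans_lt (Order.lt_succ κ)
  have hsup : ⨆ b, δ b < (Order.succ κ).ord := by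
    refine Ordinal.iSup_lt_of_lt_cof ?_ hδ
    rw [(isRegular_succ hκ).cof_ord]
    exact hβ.trans_lt (Order.lt_succ κ)
  have hγ : (⨆ b, δ b) + Ordinal.omega0 < (Order.succ κ).ord :=
    Ordinal.isPrincipal_add_ord hsucc.le hsup (omega0_lt_ord.2 hsucc)
  exact hF (F _ hγ) _ hγ
    ((Ordinal.le_iSup δ _).trans_lt (lt_add_of_pos_right _ Ordinal.omega0_pos))
    (Ordinal.isSuccLimit_add _ Ordinal.isSuccLimit_omega0) rfl

namespace Approx

variable {ι M : Type u} (q : M → ℕ → Bool) (p : M → M → ℕ → ι)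

def IsLarge (bound : Cardinal.{u}) (o : Ordinal.{u}) {s : ℕ} (d : Approx ι s) : Prop :=
  ∀ γ < o, d.RealizedAtRank q p bound γ

def root : Approx ι 0 :=
  ⟨0, fun _ => Fin.elim0, fun _ _ => Fin.elim0⟩

variable {q p} {bound : Cardinal.{u}}

theorem isLarge_root {o : Ordinal.{u}}
    (h : ∀ γ < o, ∃ w : Set M, w.Nonempty ∧ codeRkGe q p bound γ w) :
    (root : Approx ι 0).IsLarge q p bound o := by
  intro γ hγ
  obtain ⟨w, ⟨c, hc⟩, hrk⟩ := h γ hγ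
  exact ⟨w, fun _ => c, fun _ _ _ => Subsingleton.elim _ _, range_subset_iff.2 fun _ => hc, hrk,
    fun _ _ k => k.elim0⟩

/-- Among the refinements produced at the ranks `γ < κ⁺`, at most `κ` are distinct; one of them is
produced at cofinally many limit ranks, and it is large. -/
theorem IsLarge.exists_refines [DecidableEq M] (hq : Injective q) {κ : Cardinal.{u}}
    (hκ : ℵ₀ ≤ κ) (hι : #ι ≤ κ) {s : ℕ} {d : Approx ι s}
    (hd : d.IsLarge q p bound (Order.succ κ).ord) :
    ∃ d' : Approx ι (s + 1), d.Refines d' ∧ d'.IsLarge q p bound (Order.succ κ).ord := by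
  have hsucc : ℵ₀ ≤ Order.succ κ := hκ.trans (Order.le_succ κ)
  have hstep : ∀ γ < (Order.succ κ).ord,
      ∃ d' : Approx ι (s + 1), d.Refines d' ∧ d'.RealizedAtRank q p bound γ := by
    intro γ hγ
    refine (hd _ (Ordinal.isPrincipal_add_ord hsucc hγ ?_)).exists_refines hq
    exact (Ordinal.natCast_lt_omega0 _).trans_le (omega0_le_ord.2 hsucc)
  choose F hF using hstep
  obtain ⟨d', hd'⟩ := exists_cofinal_isSuccLimit_fiber hκ (mk_le hκ hι (s + 1)) F
  obtain ⟨γ₀, hγ₀, -, -, rfl⟩ := hd' 0 (ord_pos.2 (aleph0_pos.trans_le hsucc))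
  refine ⟨_, (hF γ₀ hγ₀).1, fun δ hδ => ?_⟩
  obtain ⟨γ, hγ, hδγ, hlim, hFγ⟩ := hd' δ hδ
  exact hFγ ▸ (hF γ hγ).2.of_isSuccLimit hlim hδγ

theorem exists_seq_refines [DecidableEq M] (hq : Injective q) {κ : Cardinal.{u}} (hκ : ℵ₀ ≤ κ)
    (hι : #ι ≤ κ) {d₀ : Approx ι 0} (h₀ : d₀.IsLarge q p bound (Order.succ κ).ord) :
    ∃ D : ∀ s, Approx ι s, (∀ s, (D s).IsLarge q p bound (Order.succ κ).ord) ∧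
      ∀ s, (D s).Refines (D (s + 1)) := by
  choose next hnext using fun s (d : {d : Approx ι s // d.IsLarge q p bound (Order.succ κ).ord}) =>
    d.2.exists_refines hq hκ hι
  let D : ∀ s, {d : Approx ι s // d.IsLarge q p bound (Order.succ κ).ord} :=
    fun s => Nat.rec ⟨d₀, h₀⟩ (fun s d => ⟨next s d, (hnext s d).2⟩) s
  exact ⟨fun s => (D s).1, fun s => (D s).2, fun s => (hnext s (D s)).1⟩

end Approx

section PrefixChain

variable {α : Type*} {m : ℕ → ℕ} (f : ∀ s, Fin (m s) → α)

theorem FinPrefix.of_chain (hm : Monotone m) {s₀ : ℕ}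
    (h : ∀ s, s₀ ≤ s → FinPrefix (f s) (f (s + 1))) {s t : ℕ} (hs : s₀ ≤ s) (hst : s ≤ t) :
    FinPrefix (f s) (f t) := by
  induction t, hst using Nat.le_induction with
  | base => exact fun _ _ _ => rfl
  | succ t hst ih =>
    intro k hk hk'
    rw [h t (hs.trans hst) k (hk.trans_le (hm hst)) hk']
    exact ih k hk _

/-- The sequence whose initial segments are the `f s` for `s ≥ s₀`. -/
def chainLimit (hm : StrictMono m) (s₀ k : ℕ) : α :=
  f (max (k + 1) s₀) ⟨k, (Nat.lt_succ_self k).trans_le ((le_max_left _ _).trans (hm.id_le _))⟩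

variable {f}

theorem chainLimit_eq (hm : StrictMono m) {s₀ : ℕ}
    (h : ∀ s, s₀ ≤ s → FinPrefix (f s) (f (s + 1))) {s : ℕ} (hs : s₀ ≤ s) {k : ℕ}
    (hk : k < m s) : chainLimit f hm s₀ k = f s ⟨k, hk⟩ := by
  rcases le_total (max (k + 1) s₀) s with hle | hle
  · exact (FinPrefix.of_chain f hm.monotone h (le_max_right _ _) hle k _ hk).symm
  · exact FinPrefix.of_chain f hm.monotone h hs hle k hk _

theorem restrict_chainLimit (hm : StrictMono m) {s₀ : ℕ}
    (h : ∀ s, s₀ ≤ s → FinPrefix (f s) (f (s + 1))) {s n : ℕ} (hs : s₀ ≤ s) (hn : n ≤ m s) :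
    (fun i : Fin n => chainLimit f hm s₀ i) = fun i => f s (Fin.castLE hn i) :=
  funext fun _ => chainLimit_eq hm h hs _

end PrefixChain

def initSeg {α : Type*} (b : ℕ → α) (s : ℕ) : Fin s → α :=
  fun i => b i

theorem initSeg_succ {α : Type*} (b : ℕ → α) (s : ℕ) :
    initSeg b (s + 1) = Fin.snoc (initSeg b s) (b s) := by
  funext i
  refine Fin.lastCases ?_ (fun j => ?_) i
  · rw [Fin.snoc_last]
    rfl
  · rw [Fin.snoc_castSucc]
    rfl

theorem continuous_initSeg {α : Type*} [TopologicalSpace α] (s : ℕ) :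
    Continuous fun b : ℕ → α => initSeg b s :=
  continuous_pi fun i => continuous_apply (i : ℕ)

instance {X : Type*} [TopologicalSpace X] [Nontrivial X] : PerfectSpace (ℕ → X) := by
  refine ⟨preperfect_iff_nhds.2 fun b _ U hU => ?_⟩
  choose other hother using fun x : X => exists_ne x
  have hlim : Tendsto (fun n => update b n (other (b n))) atTop (𝓝 b) := by
    refine tendsto_pi_nhds.2 fun k => tendsto_const_nhds.congr' ?_
    filter_upwards [eventually_gt_atTop k] with n hn
    exact (update_of_ne hn.ne _ _).symm
  obtain ⟨n, hn⟩ := (hlim.eventually_mem hU).exists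
  exact ⟨_, ⟨hn, mem_univ _⟩, fun h => hother (b n) (by simpa using congrFun h n)⟩

theorem preperfect_range {X Y : Type*} [TopologicalSpace X] [PerfectSpace X]
    [TopologicalSpace Y] {f : X → Y} (hf : Continuous f) (hinj : Injective f) :
    Preperfect (range f) := by
  rw [preperfect_iff_nhds]
  rintro _ ⟨x, rfl⟩ U hU
  obtain ⟨y, ⟨hyU, -⟩, hyx⟩ := preperfect_iff_nhds.1 PerfectSpace.univ_preperfect x (mem_univ x)
    _ (hf.continuousAt hU)
  exact ⟨f y, ⟨hyU, mem_range_self y⟩, hinj.ne hyx⟩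

namespace Approx

section Limit

variable {ι : Type u} {D : ∀ s, Approx ι s} (hD : ∀ s, (D s).Refines (D (s + 1)))
include hD

theorem strictMono_len : StrictMono fun s => (D s).len :=
  strictMono_nat_of_lt_succ fun s => (hD s).len_lt

def limitReal (b : ℕ → Bool) : ℕ → Bool :=
  chainLimit (fun s => (D s).real (initSeg b s)) (strictMono_len hD) 0

def limitWit (b c : ℕ → Bool) (s₀ : ℕ) : ℕ → ι :=
  chainLimit (fun s => (D s).wit (initSeg b s) (initSeg c s)) (strictMono_len hD) s₀

theorem real_chain (b : ℕ → Bool) (s : ℕ) :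
    FinPrefix ((D s).real (initSeg b s)) ((D (s + 1)).real (initSeg b (s + 1))) := by
  rw [initSeg_succ]
  exact (hD s).real_prefix _ _

theorem wit_chain {b c : ℕ → Bool} {s₀ : ℕ} (hbc : b = c ∨ initSeg b s₀ ≠ initSeg c s₀)
    (s : ℕ) (hs : s₀ ≤ s) :
    FinPrefix ((D s).wit (initSeg b s) (initSeg c s))
      ((D (s + 1)).wit (initSeg b (s + 1)) (initSeg c (s + 1))) := by
  rw [initSeg_succ, initSeg_succ]
  refine (hD s).wit_prefix _ _ _ _ ?_
  rcases hbc with rfl | hbc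
  · exact Or.inr rfl
  · exact Or.inl fun h => hbc (funext fun i => congrFun h ⟨i, i.2.trans_le hs⟩)

theorem continuous_limitReal : Continuous (limitReal hD) :=
  continuous_pi fun k =>
    (continuous_of_discreteTopology (f := fun v => (D (max (k + 1) 0)).real v ⟨k, _⟩)).comp
      (continuous_initSeg _)

theorem injective_limitReal : Injective (limitReal hD) := by
  intro b c hbc
  by_contra hne
  obtain ⟨i, hi⟩ := Function.ne_iff.1 hne
  have hseg : initSeg b (i + 1) ≠ initSeg c (i + 1) :=
    fun h => hi (congrFun h ⟨i, Nat.lt_succ_self i⟩)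
  obtain ⟨k, hk⟩ := Function.ne_iff.1 ((hD i).injective_real.ne hseg)
  apply hk
  rw [← chainLimit_eq (strictMono_len hD) (fun s _ => real_chain hD b s) (Nat.zero_le _) k.2,
    ← chainLimit_eq (strictMono_len hD) (fun s _ => real_chain hD c s) (Nat.zero_le _) k.2]
  exact congrFun hbc k

end Limit

theorem IsRealizedBy.mem_tree {ι M : Type} {q : M → ℕ → Bool} {p : M → M → ℕ → ι} {T : Tree22 ι}
    (hT : ∀ z y n, ((fun i : Fin n => q z i), (fun i : Fin n => q y i),
      (fun i : Fin n => p z y i)) ∈ T.mem n)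
    {s : ℕ} {d : Approx ι s} {x : (Fin s → Bool) → M} (hx : d.IsRealizedBy q p x)
    (u v : Fin s → Bool) : (d.real u, d.real v, d.wit u v) ∈ T.mem d.len := by
  have hu : d.real u = fun k : Fin d.len => q (x u) k := funext fun k => (hx u v k).1.symm
  have hv : d.real v = fun k : Fin d.len => q (x v) k := funext fun k => (hx v u k).1.symm
  have huv : d.wit u v = fun k : Fin d.len => p (x u) (x v) k := funext fun k => (hx u v k).2.symm
  rw [hu, hv, huv]
  exact hT (x u) (x v) d.len

theorem limitReal_mem_prjlim {ι : Type} {T : Tree22 ι} {D : ∀ s, Approx ι s}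
    (hD : ∀ s, (D s).Refines (D (s + 1))) (htree : ∀ s u v,
      ((D s).real u, (D s).real v, (D s).wit u v) ∈ T.mem (D s).len) (b c : ℕ → Bool) :
    (limitReal hD b, limitReal hD c) ∈ prjlim T := by
  obtain ⟨s₀, hbc⟩ : ∃ s₀, b = c ∨ initSeg b s₀ ≠ initSeg c s₀ := by
    by_cases hbc : b = c
    · exact ⟨0, Or.inl hbc⟩
    obtain ⟨i, hi⟩ := Function.ne_iff.1 hbc
    exact ⟨i + 1, Or.inr fun h => hi (congrFun h ⟨i, Nat.lt_succ_self i⟩)⟩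
  refine ⟨limitWit hD b c s₀, fun n => ?_⟩
  have hn : n ≤ (D (max n s₀)).len := (le_max_left _ _).trans ((strictMono_len hD).id_le _)
  have hmem := T.closed _ _ (htree (max n s₀) (initSeg b _) (initSeg c _)) n hn
  have hlen := strictMono_len hD
  rwa [← restrict_chainLimit hlen (fun s _ => real_chain hD b s) (Nat.zero_le _) hn,
    ← restrict_chainLimit hlen (fun s _ => real_chain hD c s) (Nat.zero_le _) hn,
    ← restrict_chainLimit hlen (wit_chain hD hbc) (le_max_right _ _) hn] at hmem

end Approx

/-- if `Pr_{κ⁺}(λ; κ)` and the `κ`-Souslin set `prjlim T` of a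
`(2,2,κ)`-tree `T` contains a `λ`-square, then it contains a perfect square. -/
theorem stmt_10 (κ : Cardinal.{0}) (hκ : ℵ₀ ≤ κ) (lam : Cardinal.{0})
    (hPr : Pr 0 (Order.succ κ).ord lam (Order.succ κ) κ)
    (ι : Type) (hι : Cardinal.mk ι = κ) (T : Tree22 ι)
    (A : Set (ℕ → Bool)) (hA : Cardinal.mk A = lam) (hsub : A ×ˢ A ⊆ prjlim T) :
    ∃ P : Set (ℕ → Bool), Perfect P ∧ P.Nonempty ∧ P ×ˢ P ⊆ prjlim T := by
  classical
  choose wit hwit using fun z y : A => hsub (mk_mem_prod z.2 y.2)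
  have hroot : (Approx.root : Approx ι 0).IsLarge Subtype.val wit (Order.succ κ)
      (Order.succ κ).ord := by
    refine Approx.isLarge_root fun γ hγ => ?_
    obtain ⟨w, -, hne, hrk⟩ :=
      hPr (codeLang ι) A (codeStructure Subtype.val wit) hA (card_codeLang_le hκ hι.le) γ hγ
    exact ⟨w, hne, hrk⟩
  obtain ⟨D, hlarge, hD⟩ := Approx.exists_seq_refines Subtype.val_injective hκ hι.le hroot
  have htree : ∀ s u v, ((D s).real u, (D s).real v, (D s).wit u v) ∈ T.mem (D s).len := by
    intro s u v
    obtain ⟨-, x, -, -, -, hx⟩ := hlarge s 0 (ord_pos.2 ((aleph0_pos.trans_le hκ).trans_le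
      (Order.le_succ κ)))
    exact hx.mem_tree hwit u v
  have hcont := Approx.continuous_limitReal hD
  refine ⟨range (Approx.limitReal hD), ⟨(isCompact_range hcont).isClosed,
    preperfect_range hcont (Approx.injective_limitReal hD)⟩, range_nonempty _, ?_⟩
  rintro ⟨_, _⟩ ⟨⟨b, rfl⟩, ⟨c, rfl⟩⟩
  exact Approx.limitReal_mem_prjlim hD htree b c

end Sh522
end
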